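/- arXiv:1604.08341 — 4 statements merged into one kernel-verified Lean document; each statement's English description precedes it below -/
import Mathlib

section
/- Let 1 < α < 2, β ∈ (0, α−1), L > 0 and C > 0. Let k : (0,∞)×[0,L]×[0,L] → [0,∞) be a measurable function satisfying k(s,x,y) ≤ C s/(s^{1/α}+|y−x|)^{1+α} for all s > 0 and x, y ∈ [0,L]. Then there exists a constant c > 0 depending only on α, β and C such that for every γ < 0, sup_{t ≥ 0, x ∈ [0,L]} ∫₀^t e^{γ s} s^{−2β/α} ∫₀^L k(s,x,y)^{2−β} dy ds ≤ c |γ|^{(β+1−α)/α}. -/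
/-!
For fixed `s`, raising the kernel bound to the power `2 - β` and integrating in `y` over the whole
line gives a multiple of `s ^ ((β - 1) / α)`, because
`∫ (a + |y - x|) ^ (-q) dy = 2 a ^ (1 - q) / (q - 1)` with `a = s ^ (1 / α)` and
`q = (1 + α) (2 - β) > 1`. After the weight `s ^ (-2β / α)` the time integrand is dominated by
`K s ^ (p - 1) e ^ (-|γ| s)` with `p = 1 - (β + 1) / α > 0`, whose integral over `(0, ∞)` is
`K Γ(p) |γ| ^ (-p)`.
-/

open MeasureTheory Set Filter

section Translation

variable {E : Type*} [NormedAddCommGroup E]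

theorem integrableOn_Ioi_comp_add_right {f : ℝ → E} {c : ℝ} (a : ℝ)
    (hf : IntegrableOn f (Ioi c)) : IntegrableOn (fun x => f (x + a)) (Ioi (c - a)) := by
  rw [← preimage_add_const_Ioi]
  exact ((measurePreserving_add_right volume a).integrableOn_comp_preimage
    (measurableEmbedding_addRight a)).2 hf

theorem integral_Ioi_comp_add_right [NormedSpace ℝ E] (f : ℝ → E) (a c : ℝ) :
    ∫ x in Ioi (c - a), f (x + a) = ∫ x in Ioi c, f x := by
  rw [← preimage_add_const_Ioi]
  exact (measurePreserving_add_right volume a).setIntegral_preimage_emb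
    (measurableEmbedding_addRight a) f (Ioi c)

theorem integrable_comp_abs {f : ℝ → E} (hf : IntegrableOn f (Ioi 0)) :
    Integrable (fun x => f |x|) := by
  have hIoi : IntegrableOn (fun x => f |x|) (Ioi 0) :=
    hf.congr_fun (fun x hx => by rw [abs_of_pos hx]) measurableSet_Ioi
  have hIic : IntegrableOn (fun x => f |x|) (Iic 0) := by
    have hneg : MeasurableEmbedding fun x : ℝ => -x := (Homeomorph.neg ℝ).measurableEmbedding
    rw [← Measure.map_neg_eq_self (volume : Measure ℝ), hneg.integrableOn_map_iff]
    simp_rw [Function.comp_def, abs_neg, neg_preimage, neg_Iic, neg_zero]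
    exact (integrableOn_Ici_iff_integrableOn_Ioi).2 hIoi
  rw [← integrableOn_univ, ← Iic_union_Ioi (a := 0)]
  exact hIic.union hIoi

end Translation

section ShiftedPower

variable {a r : ℝ}

theorem integrableOn_Ioi_add_rpow (ha : 0 < a) (hr : r < -1) :
    IntegrableOn (fun u : ℝ => (a + u) ^ r) (Ioi 0) := by
  simpa only [sub_self, add_comm a] using
    integrableOn_Ioi_comp_add_right a (integrableOn_Ioi_rpow_of_lt hr ha)

theorem integral_Ioi_add_rpow (ha : 0 < a) (hr : r < -1) :
    ∫ u in Ioi (0 : ℝ), (a + u) ^ r = -a ^ (r + 1) / (r + 1) := by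
  simpa only [sub_self, add_comm a] using
    (integral_Ioi_comp_add_right (fun v : ℝ => v ^ r) a a).trans (integral_Ioi_rpow_of_lt hr ha)

theorem integrable_add_abs_sub_rpow (ha : 0 < a) (hr : r < -1) (x : ℝ) :
    Integrable (fun y : ℝ => (a + |y - x|) ^ r) :=
  (integrable_comp_abs (integrableOn_Ioi_add_rpow ha hr)).comp_sub_right x

theorem integral_add_abs_sub_rpow (ha : 0 < a) (hr : r < -1) (x : ℝ) :
    ∫ y : ℝ, (a + |y - x|) ^ r = 2 * (-a ^ (r + 1) / (r + 1)) := by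
  rw [integral_sub_right_eq_self (fun u : ℝ => (a + |u|) ^ r) x,
    integral_comp_abs (f := fun u => (a + u) ^ r), integral_Ioi_add_rpow ha hr]

end ShiftedPower

theorem setIntegral_rpow_le_of_le_stable_bound {α C ρ s x : ℝ} {S : Set ℝ} {f : ℝ → ℝ}
    (hα : α ≠ 0) (hC : 0 ≤ C) (hs : 0 < s) (hρ : 0 ≤ ρ) (hq : 1 < (1 + α) * ρ)
    (hS : MeasurableSet S) (hf0 : ∀ y ∈ S, 0 ≤ f y)
    (hf : ∀ y ∈ S, f y ≤ C * s / (s ^ (1 / α) + |y - x|) ^ (1 + α)) :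
    ∫ y in S, f y ^ ρ ≤ 2 * C ^ ρ / ((1 + α) * ρ - 1) * s ^ ((1 - ρ) / α) := by
  set a := s ^ (1 / α)
  have ha : 0 < a := Real.rpow_pos_of_pos hs _
  have hr : -((1 + α) * ρ) < -1 := by linarith
  set g : ℝ → ℝ := fun y => (C * s) ^ ρ * (a + |y - x|) ^ (-((1 + α) * ρ))
  have hg : Integrable g := (integrable_add_abs_sub_rpow ha hr x).const_mul _
  have hfg : ∀ y ∈ S, f y ^ ρ ≤ g y := fun y hy => by
    have hd : 0 < a + |y - x| := by positivity
    calc f y ^ ρ ≤ (C * s / (a + |y - x|) ^ (1 + α)) ^ ρ :=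
          Real.rpow_le_rpow (hf0 y hy) (hf y hy) hρ
      _ = g y := by
          rw [Real.div_rpow (by positivity) (by positivity), ← Real.rpow_mul hd.le,
            div_eq_mul_inv, ← Real.rpow_neg hd.le]
  calc ∫ y in S, f y ^ ρ ≤ ∫ y in S, g y :=
        integral_mono_of_nonneg
          (ae_restrict_of_forall_mem hS fun y hy => Real.rpow_nonneg (hf0 y hy) _)
          hg.integrableOn (ae_restrict_of_forall_mem hS hfg)
    _ ≤ ∫ y, g y := setIntegral_le_integral hg (Eventually.of_forall fun y => by positivity)
    _ = 2 * C ^ ρ / ((1 + α) * ρ - 1) * s ^ ((1 - ρ) / α) := by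
        have hexp : (1 - ρ) / α = ρ + 1 / α * (-((1 + α) * ρ) + 1) := by field_simp; ring
        rw [integral_const_mul, integral_add_abs_sub_rpow ha hr, Real.mul_rpow hC hs.le,
          ← Real.rpow_mul hs.le, hexp, Real.rpow_add hs,
          show -((1 + α) * ρ) + 1 = -((1 + α) * ρ - 1) by ring, neg_div, div_neg, neg_neg]
        ring

section GammaIntegral

variable {p b : ℝ}

theorem integrableOn_Ioi_rpow_mul_exp_neg_mul (hp : 0 < p) (hb : 0 < b) :
    IntegrableOn (fun s : ℝ => s ^ (p - 1) * Real.exp (-(b * s))) (Ioi 0) := by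
  simpa only [Real.rpow_one, neg_mul] using
    integrableOn_rpow_mul_exp_neg_mul_rpow (s := p - 1) (p := 1) (by linarith) zero_lt_one hb

theorem setIntegral_Ioc_rpow_mul_exp_neg_mul_le (hp : 0 < p) (hb : 0 < b) (t : ℝ) :
    ∫ s in Ioc 0 t, s ^ (p - 1) * Real.exp (-(b * s)) ≤ b ^ (-p) * Real.Gamma p :=
  calc ∫ s in Ioc 0 t, s ^ (p - 1) * Real.exp (-(b * s))
      ≤ ∫ s in Ioi 0, s ^ (p - 1) * Real.exp (-(b * s)) :=
        setIntegral_mono_set (integrableOn_Ioi_rpow_mul_exp_neg_mul hp hb)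
          (ae_restrict_of_forall_mem measurableSet_Ioi fun s hs => by
            have := mem_Ioi.1 hs; positivity)
          Ioc_subset_Ioi_self.eventuallyLE
    _ = b ^ (-p) * Real.Gamma p := by
        rw [Real.integral_rpow_mul_exp_neg_mul_Ioi hp hb, one_div, Real.inv_rpow hb.le,
          Real.rpow_neg hb.le]

theorem setIntegral_Ioc_le_of_le_rpow_mul_exp_neg_mul {F : ℝ → ℝ} {K t : ℝ} (hK : 0 ≤ K)
    (hp : 0 < p) (hb : 0 < b) (hF0 : ∀ s ∈ Ioc 0 t, 0 ≤ F s)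
    (hF : ∀ s ∈ Ioc 0 t, F s ≤ K * (s ^ (p - 1) * Real.exp (-(b * s)))) :
    ∫ s in Ioc 0 t, F s ≤ K * (b ^ (-p) * Real.Gamma p) :=
  calc ∫ s in Ioc 0 t, F s ≤ ∫ s in Ioc 0 t, K * (s ^ (p - 1) * Real.exp (-(b * s))) :=
        integral_mono_of_nonneg (ae_restrict_of_forall_mem measurableSet_Ioc hF0)
          (((integrableOn_Ioi_rpow_mul_exp_neg_mul hp hb).mono_set Ioc_subset_Ioi_self).const_mul K)
          (ae_restrict_of_forall_mem measurableSet_Ioc hF)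
    _ = K * ∫ s in Ioc 0 t, s ^ (p - 1) * Real.exp (-(b * s)) := integral_const_mul _ _
    _ ≤ K * (b ^ (-p) * Real.Gamma p) := by
        gcongr
        exact setIntegral_Ioc_rpow_mul_exp_neg_mul_le hp hb t

end GammaIntegral

theorem kernel_integral_bound_neg_gamma_general (α β C : ℝ) (hα1 : 1 < α) (hα2 : α < 2)
    (hβ : β < α - 1) (hC : 0 < C) :
    ∃ c : ℝ, 0 < c ∧ ∀ L : ℝ, 0 < L → ∀ k : ℝ → ℝ → ℝ → ℝ,
      Measurable (fun q : ℝ × ℝ × ℝ => k q.1 q.2.1 q.2.2) →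
      (∀ s : ℝ, 0 < s → ∀ x ∈ Icc (0:ℝ) L, ∀ y ∈ Icc (0:ℝ) L, 0 ≤ k s x y) →
      (∀ s : ℝ, 0 < s → ∀ x ∈ Icc (0:ℝ) L, ∀ y ∈ Icc (0:ℝ) L,
        k s x y ≤ C * s / (s ^ (1/α) + |y - x|) ^ (1 + α)) →
      ∀ γ : ℝ, γ < 0 → ∀ t : ℝ, 0 ≤ t → ∀ x ∈ Icc (0:ℝ) L,
        (∫ s in Ioc (0:ℝ) t, Real.exp (γ * s) * s ^ (-(2 * β) / α) *
            ∫ y in Icc (0:ℝ) L, k s x y ^ (2 - β))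
          ≤ c * |γ| ^ ((β + 1 - α) / α) := by
  have hα0 : 0 < α := by linarith
  set p := 1 - (β + 1) / α with hp_def
  have hp : 0 < p := by
    have := (div_lt_one hα0).2 (by linarith : β + 1 < α)
    linarith
  have hq : 1 < (1 + α) * (2 - β) := by nlinarith
  set K := 2 * C ^ (2 - β) / ((1 + α) * (2 - β) - 1)
  have hK : 0 < K := div_pos (by positivity) (by linarith)
  refine ⟨K * Real.Gamma p, mul_pos hK (Real.Gamma_pos_of_pos hp), ?_⟩
  intro L _ k _ hk0 hkb γ hγ t _ x hx
  calc _ ≤ K * (|γ| ^ (-p) * Real.Gamma p) := by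
        refine setIntegral_Ioc_le_of_le_rpow_mul_exp_neg_mul hK.le hp (abs_pos.2 hγ.ne)
          (fun s hs => ?_) (fun s hs => ?_) <;> obtain ⟨hs, -⟩ := hs
        · exact mul_nonneg (by positivity) (setIntegral_nonneg measurableSet_Icc fun y hy =>
            Real.rpow_nonneg (hk0 s hs x hx y hy) _)
        · have hinner := setIntegral_rpow_le_of_le_stable_bound hα0.ne' hC.le hs (by linarith) hq
            measurableSet_Icc (hk0 s hs x hx) (hkb s hs x hx)
          have hexp : -(2 * β) / α + (1 - (2 - β)) / α = p - 1 := by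
            rw [hp_def]; field_simp; ring
          calc _ ≤ Real.exp (γ * s) * s ^ (-(2 * β) / α) * (K * s ^ ((1 - (2 - β)) / α)) := by
                gcongr
            _ = K * (s ^ (p - 1) * Real.exp (-(|γ| * s))) := by
                rw [← hexp, Real.rpow_add hs, abs_of_neg hγ, neg_mul, neg_neg]
                ring
    _ = K * Real.Gamma p * |γ| ^ ((β + 1 - α) / α) := by
        rw [show (β + 1 - α) / α = -p by rw [hp_def]; field_simp; ring]
        ring

/-- Lemma 3.1: weighted space-time integral bound for a kernel dominated by the
α-stable bound `C s (s^{1/α}+|y-x|)^{-(1+α)}`, uniform over `t ≥ 0`, `x ∈ [0,L]`. -/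
theorem kernel_integral_bound_neg_gamma (α β C : ℝ) (hα1 : 1 < α) (hα2 : α < 2)
    (hβ0 : 0 < β) (hβ : β < α - 1) (hC : 0 < C) :
    ∃ c : ℝ, 0 < c ∧ ∀ L : ℝ, 0 < L → ∀ k : ℝ → ℝ → ℝ → ℝ,
      Measurable (fun q : ℝ × ℝ × ℝ => k q.1 q.2.1 q.2.2) →
      (∀ s : ℝ, 0 < s → ∀ x ∈ Icc (0:ℝ) L, ∀ y ∈ Icc (0:ℝ) L, 0 ≤ k s x y) →
      (∀ s : ℝ, 0 < s → ∀ x ∈ Icc (0:ℝ) L, ∀ y ∈ Icc (0:ℝ) L,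
        k s x y ≤ C * s / (s ^ (1/α) + |y - x|) ^ (1 + α)) →
      ∀ γ : ℝ, γ < 0 → ∀ t : ℝ, 0 ≤ t → ∀ x ∈ Icc (0:ℝ) L,
        (∫ s in Ioc (0:ℝ) t, Real.exp (γ * s) * s ^ (-(2 * β) / α) *
            ∫ y in Icc (0:ℝ) L, k s x y ^ (2 - β))
          ≤ c * |γ| ^ ((β + 1 - α) / α) :=
  kernel_integral_bound_neg_gamma_general α β C hα1 hα2 hβ hC
end

section
/- Let 1 < α < 2, β ∈ (0, α−1), λ₁ > 0, L > 0 and C > 0. Let k : (0,∞)×[0,L]×[0,L] → [0,∞) be a measurable function satisfying k(s,x,y) ≤ C s/(s^{1/α}+|y−x|)^{1+α} for all s ∈ (0,1] and x, y ∈ [0,L], and k(s,x,y) ≤ C e^{−λ₁ s} for all s ≥ 1 and x, y ∈ [0,L]. Then there exists a constant c > 0 depending only on α, β, C, L and λ₁ such that for every γ ∈ (0, (2−β)λ₁), every t ≥ 0 and every x ∈ [0,L], ∫₀^t e^{γ s} s^{−2β/α} ∫₀^L k(s,x,y)^{2−β} dy ds ≤ c ( γ^{(β+1−α)/α} + 1/((2−β)λ₁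 − γ) ). -/
/-!
Raise both kernel bounds to the power `r = 2 - β`. For `s ≤ 1`, integrating
`(s^{1/α} + |y - x|)^{-(1+α) r}` over all of `ℝ` gives `2 s^{(1 - (1+α) r)/α} / ((1+α) r - 1)`,
so the time integrand is `O(s^{-(1+β)/α})`, integrable at `0` because `β < α - 1`; for `s ≥ 1`
it is `O(e^{-((2-β)λ₁ - γ) s})`. The time integral is therefore at most
`A / (1 - (1+β)/α) + B / ((2-β)λ₁ - γ)` with `A`, `B` independent of `γ` (on `s ≤ 1` use
`e^{γ s} ≤ e^{(2-β)λ₁}`), and the first term is absorbed into the right-hand side because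
`max 1 ((2-β)λ₁) * (γ^{(β+1-α)/α} + 1/((2-β)λ₁ - γ)) ≥ 1`.
-/

open MeasureTheory Set Filter

lemma integrable_add_abs_rpow_neg {a p : ℝ} (ha : 0 < a) (hp : 1 < p) :
    Integrable fun y : ℝ => (a + |y|) ^ (-p) := by
  have h := ((integrable_one_add_norm (E := ℝ) (r := p) (by simpa using hp)).comp_div
    ha.ne').const_mul (a ^ (-p))
  refine h.congr (Eventually.of_forall fun y => ?_)
  simp only [Real.norm_eq_abs, abs_div, abs_of_pos ha]
  rw [← Real.mul_rpow ha.le (by positivity), mul_add, mul_one, mul_div_cancel₀ _ ha.ne']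

lemma integral_add_abs_rpow_neg {a p : ℝ} (ha : 0 < a) (hp : 1 < p) :
    ∫ y : ℝ, (a + |y|) ^ (-p) = 2 * a ^ (1 - p) / (p - 1) := by
  have hshift := (measurePreserving_add_right volume a).setIntegral_preimage_emb
    (measurableEmbedding_addRight a) (fun y : ℝ => y ^ (-p)) (Ioi a)
  rw [preimage_add_const_Ioi, sub_self] at hshift
  rw [integral_comp_abs (f := fun u => (a + u) ^ (-p))]
  simp_rw [add_comm a]
  rw [hshift, integral_Ioi_rpow_of_lt (by linarith) ha]
  have : p - 1 ≠ 0 := by linarith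
  rw [show -p + 1 = -(p - 1) by ring, show 1 - p = -(p - 1) by ring]
  field_simp

lemma setIntegral_add_abs_sub_rpow_neg_le {a p : ℝ} (ha : 0 < a) (hp : 1 < p) (x : ℝ)
    (S : Set ℝ) : ∫ y in S, (a + |y - x|) ^ (-p) ≤ 2 * a ^ (1 - p) / (p - 1) := by
  refine (setIntegral_le_integral ((integrable_add_abs_rpow_neg ha hp).comp_sub_right x)
    (Eventually.of_forall fun y => by positivity)).trans_eq ?_
  rw [integral_sub_right_eq_self (fun y => (a + |y|) ^ (-p)) x, integral_add_abs_rpow_neg ha hp]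

lemma setIntegral_rpow_le_of_stable_bound {α r C s x : ℝ} {f : ℝ → ℝ} {S : Set ℝ}
    (hS : MeasurableSet S) (hα : 0 < α) (hr : 1 < (1 + α) * r) (hC : 0 ≤ C) (hs : 0 < s)
    (hf0 : ∀ y ∈ S, 0 ≤ f y) (hf : ∀ y ∈ S, f y ≤ C * s / (s ^ (1 / α) + |y - x|) ^ (1 + α)) :
    ∫ y in S, f y ^ r ≤ 2 * C ^ r / ((1 + α) * r - 1) * s ^ ((1 - r) / α) := by
  have hr0 : 0 ≤ r := by nlinarith
  have ha : 0 < s ^ (1 / α) := Real.rpow_pos_of_pos hs _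
  have hpow : ∀ y ∈ S, f y ^ r ≤ C ^ r * s ^ r * (s ^ (1 / α) + |y - x|) ^ (-((1 + α) * r)) := by
    intro y hy
    have hB : 0 < s ^ (1 / α) + |y - x| := by positivity
    refine (Real.rpow_le_rpow (hf0 y hy) (hf y hy) hr0).trans_eq ?_
    rw [Real.div_rpow (by positivity) (by positivity), Real.mul_rpow hC hs.le,
      ← Real.rpow_mul hB.le, Real.rpow_neg hB.le, div_eq_mul_inv]
  have hmajorant :
      Integrable fun y => C ^ r * s ^ r * (s ^ (1 / α) + |y - x|) ^ (-((1 + α) * r)) :=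
    ((integrable_add_abs_rpow_neg ha hr).comp_sub_right x).const_mul _
  calc ∫ y in S, f y ^ r
      ≤ ∫ y in S, C ^ r * s ^ r * (s ^ (1 / α) + |y - x|) ^ (-((1 + α) * r)) :=
        integral_mono_of_nonneg (ae_restrict_of_forall_mem hS fun y hy => by
          positivity [hf0 y hy]) hmajorant.integrableOn (ae_restrict_of_forall_mem hS hpow)
    _ = C ^ r * s ^ r * ∫ y in S, (s ^ (1 / α) + |y - x|) ^ (-((1 + α) * r)) :=
        integral_const_mul _ _
    _ ≤ C ^ r * s ^ r * (2 * (s ^ (1 / α)) ^ (1 - (1 + α) * r) / ((1 + α) * r - 1)) := by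
        gcongr
        exact setIntegral_add_abs_sub_rpow_neg_le ha hr x S
    _ = 2 * C ^ r / ((1 + α) * r - 1) * s ^ ((1 - r) / α) := by
        have hexp : s ^ r * (s ^ (1 / α)) ^ (1 - (1 + α) * r) = s ^ ((1 - r) / α) := by
          rw [← Real.rpow_mul hs.le, ← Real.rpow_add hs]
          congr 1
          field_simp
          ring
        rw [← hexp]
        ring

lemma setIntegral_Ioc_le_of_le_rpow_of_le_exp {F : ℝ → ℝ} {A B q δ : ℝ} (hA : 0 ≤ A)
    (hB : 0 ≤ B) (hq : -1 < q) (hδ : 0 < δ) (hF0 : ∀ s, 0 < s → 0 ≤ F s)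
    (hF1 : ∀ s, 0 < s → s ≤ 1 → F s ≤ A * s ^ q)
    (hF2 : ∀ s, 1 < s → F s ≤ B * Real.exp (-δ * s)) (t : ℝ) :
    ∫ s in Ioc 0 t, F s ≤ A / (q + 1) + B / δ := by
  set g : ℝ → ℝ := fun s => (Ioc 0 1).indicator (fun s => A * s ^ q) s + B * Real.exp (-δ * s)
  have hpow : IntegrableOn (fun s : ℝ => A * s ^ q) (Ioc 0 1) :=
    ((intervalIntegral.intervalIntegrable_rpow' hq).1).const_mul A
  have hexp : IntegrableOn (fun s : ℝ => B * Real.exp (-δ * s)) (Ioi 0) :=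
    (exp_neg_integrableOn_Ioi 0 hδ).const_mul B
  have hg : IntegrableOn g (Ioi 0) :=
    ((integrable_indicator_iff measurableSet_Ioc).2 hpow).integrableOn.add hexp
  have hg0 : ∀ s ∈ Ioi (0 : ℝ), 0 ≤ g s := fun s hs => by
    have : 0 ≤ (Ioc 0 1).indicator (fun s => A * s ^ q) s :=
      indicator_nonneg (fun s hs => by positivity [hs.1.le]) s
    exact add_nonneg this (by positivity)
  have hFg : ∀ s ∈ Ioc (0 : ℝ) t, F s ≤ g s := by
    rintro s ⟨hs0, -⟩
    rcases le_or_gt s 1 with hs1 | hs1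
    · have : A * s ^ q ≤ g s := by
        simp only [g, indicator_of_mem (show s ∈ Ioc 0 1 from ⟨hs0, hs1⟩)]
        exact le_add_of_nonneg_right (by positivity)
      exact (hF1 s hs0 hs1).trans this
    · have : B * Real.exp (-δ * s) ≤ g s := by
        simp only [g, indicator_of_notMem (fun h : s ∈ Ioc 0 1 => hs1.not_ge h.2), zero_add,
          le_refl]
      exact (hF2 s hs1).trans this
  have hgval : ∫ s in Ioi 0, g s = A / (q + 1) + B / δ := by
    rw [integral_add ((integrable_indicator_iff measurableSet_Ioc).2 hpow).integrableOn hexp,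
      setIntegral_indicator measurableSet_Ioc, inter_eq_right.2 Ioc_subset_Ioi_self,
      integral_const_mul, integral_const_mul, ← intervalIntegral.integral_of_le zero_le_one,
      integral_rpow (Or.inl hq), integral_exp_mul_Ioi (by linarith) 0]
    simp only [Real.one_rpow, Real.zero_rpow (by linarith : q + 1 ≠ 0), mul_zero, Real.exp_zero,
      sub_zero]
    field_simp
  calc ∫ s in Ioc 0 t, F s
      ≤ ∫ s in Ioc 0 t, g s :=
        integral_mono_of_nonneg (ae_restrict_of_forall_mem measurableSet_Ioc
          fun s hs => hF0 s hs.1) (hg.mono_set Ioc_subset_Ioi_self)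
          (ae_restrict_of_forall_mem measurableSet_Ioc hFg)
    _ ≤ ∫ s in Ioi 0, g s :=
        setIntegral_mono_set hg (ae_restrict_of_forall_mem measurableSet_Ioi hg0)
          Ioc_subset_Ioi_self.eventuallyLE
    _ = A / (q + 1) + B / δ := hgval

lemma one_le_max_one_mul_rpow_add_inv_sub {γ Λ e : ℝ} (hγ : 0 < γ) (hγΛ : γ < Λ) (he : e ≤ 0) :
    1 ≤ max 1 Λ * (γ ^ e + 1 / (Λ - γ)) := by
  have hδ : 0 < 1 / (Λ - γ) := one_div_pos.2 (by linarith)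
  rcases le_or_gt γ 1 with hγ1 | hγ1
  · have := Real.one_le_rpow_of_pos_of_le_one_of_nonpos hγ hγ1 he
    nlinarith [le_max_left 1 Λ]
  · have hΛ : Λ * (1 / (Λ - γ)) ≥ 1 := by
      rw [mul_one_div, ge_iff_le, one_le_div (by linarith)]
      linarith
    nlinarith [le_max_right 1 Λ, Real.rpow_nonneg hγ.le e]

lemma exp_mul_rpow_mul_setIntegral_le_of_stable_bound {α β C γ Λ s x : ℝ} {f : ℝ → ℝ}
    {S : Set ℝ} (hS : MeasurableSet S) (hα : 0 < α) (hp : 1 < (1 + α) * (2 - β)) (hC : 0 ≤ C)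
    (hs0 : 0 < s) (hs1 : s ≤ 1) (hγ0 : 0 ≤ γ) (hγΛ : γ ≤ Λ) (hf0 : ∀ y ∈ S, 0 ≤ f y)
    (hf : ∀ y ∈ S, f y ≤ C * s / (s ^ (1 / α) + |y - x|) ^ (1 + α)) :
    Real.exp (γ * s) * s ^ (-(2 * β) / α) * ∫ y in S, f y ^ (2 - β)
      ≤ Real.exp Λ * (2 * C ^ (2 - β) / ((1 + α) * (2 - β) - 1)) * s ^ (-((1 + β) / α)) := by
  have hI0 : 0 ≤ ∫ y in S, f y ^ (2 - β) :=
    setIntegral_nonneg hS fun y hy => Real.rpow_nonneg (hf0 y hy) _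
  have hexp : s ^ (-(2 * β) / α) * s ^ ((1 - (2 - β)) / α) = s ^ (-((1 + β) / α)) := by
    rw [← Real.rpow_add hs0]
    congr 1
    ring
  calc Real.exp (γ * s) * s ^ (-(2 * β) / α) * ∫ y in S, f y ^ (2 - β)
      ≤ Real.exp Λ * s ^ (-(2 * β) / α) *
          (2 * C ^ (2 - β) / ((1 + α) * (2 - β) - 1) * s ^ ((1 - (2 - β)) / α)) := by
        gcongr
        · nlinarith
        · exact setIntegral_rpow_le_of_stable_bound hS hα hp hC hs0 hf0 hf
    _ = Real.exp Λ * (2 * C ^ (2 - β) / ((1 + α) * (2 - β) - 1)) * s ^ (-((1 + β) / α)) := by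
        rw [← hexp]
        ring

lemma exp_mul_rpow_mul_setIntegral_le_of_exp_bound {α β lam C γ L s : ℝ} {f : ℝ → ℝ}
    (hα : 0 ≤ α) (hβ0 : 0 ≤ β) (hβ2 : β ≤ 2) (hL : 0 ≤ L) (hC : 0 ≤ C) (hs : 1 ≤ s)
    (hf0 : ∀ y ∈ Icc 0 L, 0 ≤ f y) (hf : ∀ y ∈ Icc 0 L, f y ≤ C * Real.exp (-lam * s)) :
    Real.exp (γ * s) * s ^ (-(2 * β) / α) * ∫ y in Icc 0 L, f y ^ (2 - β)
      ≤ L * C ^ (2 - β) * Real.exp (-((2 - β) * lam - γ) * s) := by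
  have hI0 : 0 ≤ ∫ y in Icc 0 L, f y ^ (2 - β) :=
    setIntegral_nonneg measurableSet_Icc fun y hy => Real.rpow_nonneg (hf0 y hy) _
  have hI : ∫ y in Icc 0 L, f y ^ (2 - β) ≤ L * (C * Real.exp (-lam * s)) ^ (2 - β) := by
    calc ∫ y in Icc 0 L, f y ^ (2 - β)
        ≤ ∫ _ in Icc 0 L, (C * Real.exp (-lam * s)) ^ (2 - β) :=
          integral_mono_of_nonneg
            (ae_restrict_of_forall_mem measurableSet_Icc fun y hy => Real.rpow_nonneg (hf0 y hy) _)
            (integrableOn_const measure_Icc_lt_top.ne)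
            (ae_restrict_of_forall_mem measurableSet_Icc fun y hy =>
              Real.rpow_le_rpow (hf0 y hy) (hf y hy) (by linarith))
      _ = L * (C * Real.exp (-lam * s)) ^ (2 - β) := by
          rw [setIntegral_const, smul_eq_mul, Real.volume_real_Icc_of_le hL, sub_zero]
  have hweight : s ^ (-(2 * β) / α) ≤ 1 :=
    Real.rpow_le_one_of_one_le_of_nonpos hs (div_nonpos_of_nonpos_of_nonneg (by linarith) hα)
  calc Real.exp (γ * s) * s ^ (-(2 * β) / α) * ∫ y in Icc 0 L, f y ^ (2 - β)
      ≤ Real.exp (γ * s) * 1 * (L * (C * Real.exp (-lam * s)) ^ (2 - β)) := by gcongr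
    _ = L * C ^ (2 - β) * Real.exp (-((2 - β) * lam - γ) * s) := by
        rw [Real.mul_rpow hC (Real.exp_pos _).le, ← Real.exp_mul,
          show -((2 - β) * lam - γ) * s = γ * s + -lam * s * (2 - β) by ring, Real.exp_add]
        ring

theorem kernel_integral_bound_pos_gamma_general (α β lam₁ L C : ℝ) (hα1 : 1 < α) (hα2 : α < 2)
    (hβ0 : 0 < β) (hβ : β < α - 1) (hL : 0 < L) (hC : 0 < C) :
    ∃ c : ℝ, 0 < c ∧ ∀ k : ℝ → ℝ → ℝ → ℝ,
      Measurable (fun q : ℝ × ℝ × ℝ => k q.1 q.2.1 q.2.2) →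
      (∀ s : ℝ, 0 < s → ∀ x ∈ Icc (0:ℝ) L, ∀ y ∈ Icc (0:ℝ) L, 0 ≤ k s x y) →
      (∀ s : ℝ, 0 < s → s ≤ 1 → ∀ x ∈ Icc (0:ℝ) L, ∀ y ∈ Icc (0:ℝ) L,
        k s x y ≤ C * s / (s ^ (1/α) + |y - x|) ^ (1 + α)) →
      (∀ s : ℝ, 1 ≤ s → ∀ x ∈ Icc (0:ℝ) L, ∀ y ∈ Icc (0:ℝ) L,
        k s x y ≤ C * Real.exp (-lam₁ * s)) →
      ∀ γ : ℝ, 0 < γ → γ < (2 - β) * lam₁ → ∀ t : ℝ, 0 ≤ t → ∀ x ∈ Icc (0:ℝ) L,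
        (∫ s in Ioc (0:ℝ) t, Real.exp (γ * s) * s ^ (-(2 * β) / α) *
            ∫ y in Icc (0:ℝ) L, k s x y ^ (2 - β))
          ≤ c * (γ ^ ((β + 1 - α) / α) + 1 / ((2 - β) * lam₁ - γ)) := by
  have hα0 : 0 < α := by linarith
  have hp : 1 < (1 + α) * (2 - β) := by nlinarith
  have hq : -1 < -((1 + β) / α) := by rw [neg_lt_neg_iff, div_lt_one hα0]; linarith
  set A := Real.exp ((2 - β) * lam₁) * (2 * C ^ (2 - β) / ((1 + α) * (2 - β) - 1))
  set B := L * C ^ (2 - β)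
  have hA : 0 < A / (-((1 + β) / α) + 1) := by
    have : 0 < (1 + α) * (2 - β) - 1 := by linarith
    have : 0 < -((1 + β) / α) + 1 := by linarith
    positivity
  have hB : 0 < B := by positivity
  refine ⟨A / (-((1 + β) / α) + 1) * max 1 ((2 - β) * lam₁) + B, by positivity, ?_⟩
  intro k _ hk0 hksmall hklarge γ hγ0 hγ t _ x hx
  have hI0 : ∀ s, 0 < s → 0 ≤ ∫ y in Icc 0 L, k s x y ^ (2 - β) := fun s hs =>
    setIntegral_nonneg measurableSet_Icc fun y hy => Real.rpow_nonneg (hk0 s hs x hx y hy) _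
  have hsum := one_le_max_one_mul_rpow_add_inv_sub hγ0 hγ
    (div_nonpos_of_nonpos_of_nonneg (by linarith : β + 1 - α ≤ 0) hα0.le)
  have hγpow := Real.rpow_nonneg hγ0.le ((β + 1 - α) / α)
  calc _ ≤ A / (-((1 + β) / α) + 1) + B / ((2 - β) * lam₁ - γ) :=
        setIntegral_Ioc_le_of_le_rpow_of_le_exp (by positivity) hB.le hq (by linarith)
          (fun s hs => by have := hI0 s hs; positivity)
          (fun s hs0 hs1 => exp_mul_rpow_mul_setIntegral_le_of_stable_bound measurableSet_Icc
            hα0 hp hC.le hs0 hs1 hγ0.le hγ.le (hk0 s hs0 x hx) (hksmall s hs0 hs1 x hx))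
          (fun s hs => exp_mul_rpow_mul_setIntegral_le_of_exp_bound hα0.le hβ0.le (by linarith)
            hL.le hC.le hs.le (hk0 s (by linarith) x hx) (hklarge s hs.le x hx)) t
    _ ≤ _ := by
        have hδ : 1 / ((2 - β) * lam₁ - γ)
            ≤ γ ^ ((β + 1 - α) / α) + 1 / ((2 - β) * lam₁ - γ) := le_add_of_nonneg_left hγpow
        linarith [mul_le_mul_of_nonneg_left hsum hA.le, mul_le_mul_of_nonneg_left hδ hB.le,
          div_eq_mul_one_div B ((2 - β) * lam₁ - γ)]

/-- Lemma 3.6: weighted space-time integral bound for a kernel with a short-time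
stable-type bound and long-time exponential decay, for `γ ∈ (0,(2-β)λ₁)`. -/
theorem kernel_integral_bound_pos_gamma (α β lam₁ L C : ℝ) (hα1 : 1 < α) (hα2 : α < 2)
    (hβ0 : 0 < β) (hβ : β < α - 1) (hlam : 0 < lam₁) (hL : 0 < L) (hC : 0 < C) :
    ∃ c : ℝ, 0 < c ∧ ∀ k : ℝ → ℝ → ℝ → ℝ,
      Measurable (fun q : ℝ × ℝ × ℝ => k q.1 q.2.1 q.2.2) →
      (∀ s : ℝ, 0 < s → ∀ x ∈ Icc (0:ℝ) L, ∀ y ∈ Icc (0:ℝ) L, 0 ≤ k s x y) →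
      (∀ s : ℝ, 0 < s → s ≤ 1 → ∀ x ∈ Icc (0:ℝ) L, ∀ y ∈ Icc (0:ℝ) L,
        k s x y ≤ C * s / (s ^ (1/α) + |y - x|) ^ (1 + α)) →
      (∀ s : ℝ, 1 ≤ s → ∀ x ∈ Icc (0:ℝ) L, ∀ y ∈ Icc (0:ℝ) L,
        k s x y ≤ C * Real.exp (-lam₁ * s)) →
      ∀ γ : ℝ, 0 < γ → γ < (2 - β) * lam₁ → ∀ t : ℝ, 0 ≤ t → ∀ x ∈ Icc (0:ℝ) L,
        (∫ s in Ioc (0:ℝ) t, Real.exp (γ * s) * s ^ (-(2 * β) / α) *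
            ∫ y in Icc (0:ℝ) L, k s x y ^ (2 - β))
          ≤ c * (γ ^ ((β + 1 - α) / α) + 1 / ((2 - β) * lam₁ - γ)) :=
  kernel_integral_bound_pos_gamma_general α β lam₁ L C hα1 hα2 hβ0 hβ hL hC
end

section
/- For every τ ∈ (0,2) there exists a constant c > 0 such that for all ω ≥ 0 and all t ≥ 0, E_τ(ω t^τ) ≤ c · exp( ω^{1/τ} t ). -/
/-!
With `x = ω^{1/τ} t` the series is `Σₙ x^{nτ}/Γ(nτ+1)`. Log-convexity of `Γ` gives
`Γ(s+1) ≥ (m+1)!/(s+1)^{1-θ}` for `s = m + θ`, `m = ⌊s⌋`, and weighted AM-GM then bounds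
`x^s/Γ(s+1)` by `2 (x^m/m! + x^{m+1}/(m+1)!)`. Once `Kτ ≥ 1`, at most `K` indices `n` share the
same `⌊nτ⌋`, so the series is at most `4K Σₘ x^m/m! = 4K eˣ`.
-/

/-- The Mittag-Leffler function `E_τ(z) = Σ_{n≥0} zⁿ/Γ(nτ+1)`. -/
noncomputable def mittagLeffler (τ z : ℝ) : ℝ :=
  ∑' n : ℕ, z ^ n / Real.Gamma ((n : ℝ) * τ + 1)

open Real Finset
open scoped Nat

section FiberwiseSum

variable {f : ℕ → ℝ} {g : ℕ → ℕ} {K : ℕ}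

theorem card_filter_eq_le_of_lt_of_add_le (hg : ∀ n n', n + K ≤ n' → g n < g n')
    (s : Finset ℕ) (m : ℕ) : #{n ∈ s | g n = m} ≤ K := by
  have hK : 0 < K := Nat.pos_of_ne_zero fun h => (hg 0 0 (by omega)).false
  -- Two points of a fibre are less than `K` apart, so they have distinct residues mod `K`.
  have hinj : Set.InjOn (· % K) (({n ∈ s | g n = m} : Finset ℕ) : Set ℕ) := by
    intro n hn n' hn' hmod
    simp only [coe_filter, Set.mem_ofPred_eq] at hn hn'
    have h₁ : ¬ n + K ≤ n' := fun h => (hg n n' h).ne (hn.2.trans hn'.2.symm)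
    have h₂ : ¬ n' + K ≤ n := fun h => (hg n' n h).ne (hn'.2.trans hn.2.symm)
    exact Nat.ModEq.eq_of_abs_lt hmod (abs_sub_lt_iff.2 ⟨by omega, by omega⟩)
  simpa using card_le_card_of_injOn (t := range K) (· % K)
    (fun n _ => by simpa using Nat.mod_lt n hK) hinj

theorem sum_comp_le_mul_tsum (hf0 : 0 ≤ f) (hf : Summable f)
    (hg : ∀ n n', n + K ≤ n' → g n < g n') (s : Finset ℕ) :
    ∑ n ∈ s, f (g n) ≤ K * ∑' m, f m := by
  classical
  calc ∑ n ∈ s, f (g n) = ∑ m ∈ s.image g, #{n ∈ s | g n = m} • f m := sum_comp f g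
    _ ≤ ∑ m ∈ s.image g, K • f m := by
      gcongr with m
      · exact hf0 m
      · exact card_filter_eq_le_of_lt_of_add_le hg s m
    _ = K * ∑ m ∈ s.image g, f m := by rw [← smul_sum, nsmul_eq_mul]
    _ ≤ K * ∑' m, f m := by gcongr; exact hf.sum_le_tsum _ fun m _ => hf0 m

theorem summable_comp_of_lt_of_add_le (hf0 : 0 ≤ f) (hf : Summable f)
    (hg : ∀ n n', n + K ≤ n' → g n < g n') : Summable fun n => f (g n) :=
  summable_of_sum_le (fun n => hf0 (g n)) fun s => sum_comp_le_mul_tsum hf0 hf hg s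

theorem tsum_comp_le_mul_tsum (hf0 : 0 ≤ f) (hf : Summable f)
    (hg : ∀ n n', n + K ≤ n' → g n < g n') : ∑' n, f (g n) ≤ K * ∑' m, f m :=
  tsum_le_of_sum_le' (mul_nonneg K.cast_nonneg (tsum_nonneg hf0))
    (sum_comp_le_mul_tsum hf0 hf hg)

end FiberwiseSum

theorem floor_nat_mul_lt_floor_nat_mul {τ : ℝ} {K : ℕ} (hK : 1 ≤ K * τ) {n n' : ℕ}
    (h : n + K ≤ n') : ⌊n * τ⌋₊ < ⌊n' * τ⌋₊ := by
  have hτ : 0 < τ := pos_of_mul_pos_right (one_pos.trans_le hK) K.cast_nonneg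
  have hnK : (n + K : ℝ) ≤ n' := by exact_mod_cast h
  refine Nat.lt_of_succ_le (Nat.le_floor ?_)
  push_cast
  nlinarith [Nat.floor_le (mul_nonneg n.cast_nonneg hτ.le)]

theorem factorial_succ_le_Gamma_mul_rpow (m : ℕ) {θ : ℝ} (h0 : 0 ≤ θ) (h1 : θ ≤ 1) :
    ((m + 1)! : ℝ) ≤ Gamma (m + θ + 1) * (m + θ + 1) ^ (1 - θ) := by
  set x : ℝ := m + θ + 1
  have hx : 0 < x := by positivity
  have hΓ : 0 < Gamma x := Gamma_pos_of_pos hx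
  -- `m + 2` is the convex combination `θ x + (1 - θ) (x + 1)`.
  have hconv := convexOn_log_Gamma.2 (Set.mem_Ioi.2 hx) (Set.mem_Ioi.2 (by linarith : 0 < x + 1))
    h0 (sub_nonneg.2 h1) (add_sub_cancel θ 1)
  have hpt : θ * x + (1 - θ) * (x + 1) = ((m + 1 : ℕ) : ℝ) + 1 := by push_cast; ring
  simp only [Function.comp_apply, smul_eq_mul, hpt, Gamma_nat_eq_factorial,
    Gamma_add_one hx.ne', log_mul hx.ne' hΓ.ne'] at hconv
  rw [← log_le_log_iff (by positivity) (by positivity), log_mul hΓ.ne' (rpow_pos_of_pos hx _).ne',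
    log_rpow hx]
  linarith

theorem rpow_div_Gamma_le {x s : ℝ} (hx : 0 ≤ x) (hs : 0 ≤ s) :
    x ^ s / Gamma (s + 1) ≤ 2 * (x ^ ⌊s⌋₊ / ⌊s⌋₊ ! + x ^ (⌊s⌋₊ + 1) / (⌊s⌋₊ + 1)!) := by
  set m := ⌊s⌋₊
  set θ := s - m
  have hθ0 : 0 ≤ θ := sub_nonneg.2 (Nat.floor_le hs)
  have hθ1 : θ ≤ 1 := by linarith [Nat.lt_floor_add_one s]
  have hsm : s = m + θ := by ring
  have hΓ : 0 < Gamma (s + 1) := Gamma_pos_of_pos (by linarith)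
  have hΓle : ((m + 1)! : ℝ) ≤ Gamma (s + 1) * (s + 1) ^ (1 - θ) := by
    rw [hsm]; exact factorial_succ_le_Gamma_mul_rpow m hθ0 hθ1
  have hamgm : x ^ θ * (s + 1) ^ (1 - θ) ≤ x + (s + 1) := by
    nlinarith [geom_mean_le_arith_mean2_weighted hθ0 (sub_nonneg.2 hθ1) hx
      (by linarith : 0 ≤ s + 1) (by ring)]
  have hfac : ((m + 1)! : ℝ) = (m + 1) * m ! := by push_cast [Nat.factorial_succ]; ring
  calc x ^ s / Gamma (s + 1)
      ≤ x ^ s * (s + 1) ^ (1 - θ) / (m + 1)! := by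
        rw [div_le_div_iff₀ hΓ (by positivity)]
        calc x ^ s * (m + 1)! ≤ x ^ s * (Gamma (s + 1) * (s + 1) ^ (1 - θ)) := by gcongr
          _ = _ := by ring
    _ = x ^ m * (x ^ θ * (s + 1) ^ (1 - θ)) / (m + 1)! := by
        rw [hsm, rpow_add_of_nonneg hx m.cast_nonneg hθ0, rpow_natCast]; ring
    _ ≤ x ^ m * (x + (s + 1)) / (m + 1)! := by gcongr
    _ = x ^ (m + 1) / (m + 1)! + (s + 1) / (m + 1) * (x ^ m / m !) := by
        rw [hfac]; field_simp; ring
    _ ≤ 2 * (x ^ m / m ! + x ^ (m + 1) / (m + 1)!) := by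
        have : (s + 1) / (m + 1) ≤ 2 := by
          rw [div_le_iff₀ (by positivity)]; linarith
        have : 0 ≤ x ^ (m + 1) / ((m + 1)! : ℝ) := by positivity
        nlinarith [show 0 ≤ x ^ m / (m ! : ℝ) by positivity]

theorem tsum_rpow_nat_mul_div_Gamma_le {τ : ℝ} {K : ℕ} (hK : 1 ≤ K * τ) {x : ℝ} (hx : 0 ≤ x) :
    ∑' n : ℕ, x ^ (n * τ) / Gamma (n * τ + 1) ≤ 4 * K * exp x := by
  have hτ : 0 < τ := pos_of_mul_pos_right (one_pos.trans_le hK) K.cast_nonneg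
  set e : ℕ → ℝ := fun k => x ^ k / (k ! : ℝ)
  have he0 : 0 ≤ e := fun k => by positivity
  have he : Summable e := summable_pow_div_factorial x
  have hexp : ∑' k, e k = exp x := by rw [exp_eq_exp_ℝ, NormedSpace.exp_eq_tsum_div]
  set g : ℕ → ℕ := fun n => ⌊n * τ⌋₊
  have hg : ∀ n n', n + K ≤ n' → g n < g n' := fun _ _ => floor_nat_mul_lt_floor_nat_mul hK
  have hg1 : ∀ n n', n + K ≤ n' → g n + 1 < g n' + 1 := fun n n' h =>
    Nat.succ_lt_succ (hg n n' h)
  have hterm (n : ℕ) : x ^ (n * τ) / Gamma (n * τ + 1) ≤ 2 * (e (g n) + e (g n + 1)) :=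
    rpow_div_Gamma_le hx (by positivity)
  have hs1 := summable_comp_of_lt_of_add_le he0 he hg
  have hs2 := summable_comp_of_lt_of_add_le he0 he hg1
  have hs := (hs1.add hs2).mul_left 2
  calc ∑' n : ℕ, x ^ (n * τ) / Gamma (n * τ + 1)
      ≤ ∑' n, 2 * (e (g n) + e (g n + 1)) :=
        (hs.of_nonneg_of_le (fun n => div_nonneg (by positivity)
          (Gamma_nonneg_of_nonneg (by positivity))) hterm).tsum_le_tsum hterm hs
    _ = 2 * (∑' n, e (g n) + ∑' n, e (g n + 1)) := by rw [tsum_mul_left, hs1.tsum_add hs2]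
    _ ≤ 2 * (K * exp x + K * exp x) := by
        rw [← hexp]
        gcongr
        · exact tsum_comp_le_mul_tsum he0 he hg
        · exact tsum_comp_le_mul_tsum (g := fun n => g n + 1) he0 he hg1
    _ = 4 * K * exp x := by ring

theorem mittagLeffler_rpow (τ : ℝ) {x : ℝ} (hx : 0 ≤ x) :
    mittagLeffler τ (x ^ τ) = ∑' n : ℕ, x ^ (n * τ) / Gamma (n * τ + 1) := by
  refine tsum_congr fun n => ?_
  rw [← rpow_natCast, ← rpow_mul hx, mul_comm]

theorem mittagLeffler_le_exp_general (τ : ℝ) (hτ0 : 0 < τ) :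
    ∃ c : ℝ, 0 < c ∧ ∀ ω t : ℝ, 0 ≤ ω → 0 ≤ t →
      mittagLeffler τ (ω * t ^ τ) ≤ c * Real.exp (ω ^ (1/τ) * t) := by
  obtain ⟨K, hK⟩ := exists_nat_ge τ⁻¹
  have hKpos : (0 : ℝ) < K := (inv_pos.2 hτ0).trans_le hK
  refine ⟨4 * K, by positivity, fun ω t hω ht => ?_⟩
  have hx : 0 ≤ ω ^ (1/τ) * t := by positivity
  have harg : ω * t ^ τ = (ω ^ (1/τ) * t) ^ τ := by
    rw [mul_rpow (rpow_nonneg hω _) ht, ← rpow_mul hω, one_div_mul_cancel hτ0.ne', rpow_one]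
  rw [harg, mittagLeffler_rpow τ hx]
  exact tsum_rpow_nat_mul_div_Gamma_le ((inv_le_iff_one_le_mul₀ hτ0).1 hK) hx

/-- For every `τ ∈ (0,2)` there is `c > 0` with `E_τ(ω t^τ) ≤ c exp(ω^{1/τ} t)`
for all `ω, t ≥ 0`. -/
theorem mittagLeffler_le_exp (τ : ℝ) (hτ0 : 0 < τ) (hτ2 : τ < 2) :
    ∃ c : ℝ, 0 < c ∧ ∀ ω t : ℝ, 0 ≤ ω → 0 ≤ t →
      mittagLeffler τ (ω * t ^ τ) ≤ c * Real.exp (ω ^ (1/τ) * t) :=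
  mittagLeffler_le_exp_general τ hτ0
end

section
/- Let 0 < T ≤ ∞, b ≥ 0, β > 0 and let v be a nonnegative locally integrable function on [0,T). Then for every t ∈ [0,T), the sequence ( (bΓ(β))^n / Γ(nβ) ) · ∫₀^t (t−s)^{nβ−1} v(s) ds tends to 0 as n → ∞. -/
open MeasureTheory Set Filter
open scoped ENNReal

lemma aux_gamma_tendsto (c β : ℝ) (hc : 0 ≤ c) (hβ : 0 < β) :
    Tendsto (fun n : ℕ => c ^ n / Real.Gamma ((n : ℝ) * β)) atTop (nhds 0) := by
  set d : ℝ := (max c 1) ^ (β⁻¹) with hd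
  have hd1 : 1 ≤ d := Real.one_le_rpow (le_max_right c 1) (by positivity)
  have hdβ : d ^ β = max c 1 := by
    rw [hd, ← Real.rpow_mul (le_max_of_le_right zero_le_one), inv_mul_cancel₀ hβ.ne',
      Real.rpow_one]
  -- g tends to 0
  have hg : Tendsto (fun k : ℕ => d * d * (d ^ k / (k.factorial : ℝ))) atTop (nhds 0) := by
    have := (FloorSemiring.tendsto_pow_div_factorial_atTop d).const_mul (d * d)
    simpa using this
  have hm : Tendsto (fun n : ℕ => ⌊(n : ℝ) * β⌋₊ - 1) atTop atTop := by
    refine (tendsto_sub_atTop_nat 1).comp ?_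
    exact tendsto_nat_floor_atTop.comp
      ((tendsto_natCast_atTop_atTop (R := ℝ)).atTop_mul_const hβ)
  refine tendsto_of_tendsto_of_tendsto_of_le_of_le' tendsto_const_nhds (hg.comp hm) ?_ ?_
  · filter_upwards [eventually_ge_atTop 1] with n hn
    have : 0 < (n : ℝ) * β := by positivity
    exact div_nonneg (pow_nonneg hc n) (Real.Gamma_pos_of_pos this).le
  · have h2 : ∀ᶠ n : ℕ in atTop, 2 ≤ (n : ℝ) * β := by
      have := ((tendsto_natCast_atTop_atTop (R := ℝ)).atTop_mul_const hβ).eventually_ge_atTop 2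
      exact this
    filter_upwards [h2] with n hn
    set m : ℕ := ⌊(n : ℝ) * β⌋₊ with hmdef
    have hm2 : 2 ≤ m := Nat.le_floor (by exact_mod_cast hn)
    have hmle : (m : ℝ) ≤ (n : ℝ) * β := Nat.floor_le (by linarith)
    have hlt : (n : ℝ) * β < m + 1 := Nat.lt_floor_add_one _
    -- Gamma lower bound
    have hΓ : ((m - 1).factorial : ℝ) ≤ Real.Gamma ((n : ℝ) * β) := by
      have h1 : Real.Gamma ((m : ℝ)) ≤ Real.Gamma ((n : ℝ) * β) := by
        rcases eq_or_lt_of_le hmle with h | h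
        · rw [h]
        · exact (Real.Gamma_strictMonoOn_Ici (mem_Ici.mpr (by exact_mod_cast hm2))
            (mem_Ici.mpr (le_trans (by exact_mod_cast hm2) hmle)) h).le
      have h2' : Real.Gamma ((m : ℝ)) = ((m - 1).factorial : ℝ) := by
        have : ((m : ℝ)) = ((m - 1 : ℕ) : ℝ) + 1 := by
          have : 1 ≤ m := by omega
          push_cast [Nat.cast_sub this]
          ring
        rw [this, Real.Gamma_nat_eq_factorial]
      rw [← h2']; exact h1
    -- numerator bound
    have hnum : c ^ n ≤ d ^ (m + 1) := by
      have h1 : c ^ n ≤ (max c 1) ^ n := pow_le_pow_left₀ hc (le_max_left c 1) n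
      have h2' : (max c 1 : ℝ) ^ n = d ^ ((n : ℝ) * β) := by
        rw [← hdβ, ← Real.rpow_natCast (d ^ β) n, ← Real.rpow_mul (by positivity), mul_comm]
      have h3 : d ^ ((n : ℝ) * β) ≤ d ^ (((m + 1 : ℕ) : ℝ)) :=
        Real.rpow_le_rpow_of_exponent_le hd1 (by push_cast; linarith)
      rw [Real.rpow_natCast] at h3
      calc c ^ n ≤ (max c 1) ^ n := h1
        _ = d ^ ((n : ℝ) * β) := h2'
        _ ≤ d ^ (m + 1) := h3
    have hfac : (0 : ℝ) < ((m - 1).factorial : ℝ) := by positivity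
    have key : c ^ n / Real.Gamma ((n : ℝ) * β) ≤ d ^ (m + 1) / ((m - 1).factorial : ℝ) :=
      div_le_div₀ (by positivity) hnum hfac hΓ
    refine key.trans ?_
    have : d ^ (m + 1) = d * d * d ^ (m - 1) := by
      rw [show m + 1 = 2 + (m - 1) by omega, pow_add, sq]
    rw [this]
    simp only [Function.comp]
    rw [mul_div_assoc]

/-- The n-th iterate of the Riemann–Liouville-type Volterra operator applied to a
nonnegative locally integrable `v` tends to `0` pointwise on `[0,T)`. -/
theorem volterra_iterates_tendsto_zero (T : ℝ≥0∞) (hT : 0 < T) (b β : ℝ)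
    (hb : 0 ≤ b) (hβ : 0 < β)
    (v : ℝ → ℝ)
    (hv0 : ∀ t : ℝ, 0 ≤ t → ENNReal.ofReal t < T → 0 ≤ v t)
    (hvint : ∀ t : ℝ, 0 ≤ t → ENNReal.ofReal t < T → IntegrableOn v (Icc 0 t)) :
    ∀ t : ℝ, 0 ≤ t → ENNReal.ofReal t < T →
      Filter.Tendsto
        (fun n : ℕ => (b * Real.Gamma β) ^ n / Real.Gamma ((n : ℝ) * β) *
          ∫ s in Ioc (0:ℝ) t, (t - s) ^ ((n : ℝ) * β - 1) * v s)
        Filter.atTop (nhds 0) := by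
  intro t ht htT
  rcases eq_or_lt_of_le ht with rfl | htpos
  · simp
  have hΓβ : 0 < Real.Gamma β := Real.Gamma_pos_of_pos hβ
  have hvI : IntegrableOn v (Ioc 0 t) := (hvint t ht htT).mono_set Ioc_subset_Icc_self
  have hvnn : ∀ s ∈ Ioc (0:ℝ) t, 0 ≤ v s := fun s hs =>
    hv0 s hs.1.le (lt_of_le_of_lt (ENNReal.ofReal_le_ofReal hs.2) htT)
  set I : ℝ := ∫ s in Ioc (0:ℝ) t, v s with hIdef
  have hI : 0 ≤ I := setIntegral_nonneg measurableSet_Ioc hvnn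
  set c : ℝ := b * Real.Gamma β * t ^ β with hcdef
  have hc : 0 ≤ c := by
    have : (0:ℝ) ≤ t ^ β := Real.rpow_nonneg ht β
    positivity
  have hu : Tendsto (fun n : ℕ => c ^ n / Real.Gamma ((n : ℝ) * β) * (I / t))
      atTop (nhds 0) := by
    simpa using (aux_gamma_tendsto c β hc hβ).mul_const (I / t)
  have h1 : ∀ᶠ n : ℕ in atTop, 1 ≤ (n : ℝ) * β :=
    ((tendsto_natCast_atTop_atTop (R := ℝ)).atTop_mul_const hβ).eventually_ge_atTop 1
  refine tendsto_of_tendsto_of_tendsto_of_le_of_le' tendsto_const_nhds hu ?_ ?_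
  · -- nonnegativity
    filter_upwards [h1] with n hn
    have hΓn : 0 < Real.Gamma ((n : ℝ) * β) := Real.Gamma_pos_of_pos (by linarith)
    refine mul_nonneg (div_nonneg (pow_nonneg (by positivity) n) hΓn.le) ?_
    refine setIntegral_nonneg measurableSet_Ioc fun s hs => ?_
    exact mul_nonneg (Real.rpow_nonneg (by linarith [hs.2]) _) (hvnn s hs)
  · -- upper bound
    filter_upwards [h1] with n hn
    have hΓn : 0 < Real.Gamma ((n : ℝ) * β) := Real.Gamma_pos_of_pos (by linarith)
    set p : ℝ := (n : ℝ) * β - 1 with hpdef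
    have hp : 0 ≤ p := by simp [hpdef]; linarith
    have htp : (0:ℝ) ≤ t ^ p := Real.rpow_nonneg ht p
    -- integrability of the dominating function
    have hg : IntegrableOn (fun s => t ^ p * v s) (Ioc 0 t) := hvI.const_mul _
    have hbd : ∀ s ∈ Ioc (0:ℝ) t, (t - s) ^ p * v s ≤ t ^ p * v s := by
      intro s hs
      refine mul_le_mul_of_nonneg_right ?_ (hvnn s hs)
      exact Real.rpow_le_rpow (by linarith [hs.2]) (by linarith [hs.1]) hp
    have hf : IntegrableOn (fun s => (t - s) ^ p * v s) (Ioc 0 t) := by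
      refine hg.mono' ?_ ?_
      · exact (((continuous_const.sub continuous_id).rpow_const
          (fun x => Or.inr hp)).measurable.aestronglyMeasurable.mul hvI.1)
      · filter_upwards [ae_restrict_mem measurableSet_Ioc] with s hs
        rw [Real.norm_eq_abs, abs_of_nonneg
          (mul_nonneg (Real.rpow_nonneg (by linarith [hs.2]) _) (hvnn s hs))]
        exact hbd s hs
    have hint : (∫ s in Ioc (0:ℝ) t, (t - s) ^ p * v s) ≤ t ^ p * I := by
      rw [hIdef, ← integral_const_mul]
      exact setIntegral_mono_on hf hg measurableSet_Ioc hbd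
    calc (b * Real.Gamma β) ^ n / Real.Gamma ((n : ℝ) * β) *
          ∫ s in Ioc (0:ℝ) t, (t - s) ^ p * v s
        ≤ (b * Real.Gamma β) ^ n / Real.Gamma ((n : ℝ) * β) * (t ^ p * I) := by
          refine mul_le_mul_of_nonneg_left hint ?_
          exact div_nonneg (pow_nonneg (by positivity) n) hΓn.le
      _ = c ^ n / Real.Gamma ((n : ℝ) * β) * (I / t) := by
          have hpow : t ^ p = (t ^ β) ^ n / t := by
            rw [hpdef, Real.rpow_sub htpos, Real.rpow_one, ← Real.rpow_natCast (t ^ β) n,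
              ← Real.rpow_mul ht, mul_comm β (n : ℝ)]
          rw [hpow, hcdef, mul_pow]
          ring
end
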